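/- arXiv:math/0112057 — 2 statements merged into one kernel-verified Lean document; each statement's English description precedes it below -/
import Mathlib

section
/- Let g = D ⊕ g₂ be a 2-step graded nilpotent Lie algebra with [D,D] ⊆ g₂, [g, g₂] = 0. Suppose there exist X₁, X₂ ∈ D with [X₁,X₂] = 0 such that for every pair (T₁,T₂) ∈ g₂ × g₂ there exists X ∈ D with [X,X₁] = T₁ and [X,X₂] = T₂ (Ω-regularity). Then the linear map D* ⊗ g₂* → Λ³D* sending ∑ᵢ αᵢ ⊗ θᵢ to ∑ᵢ αᵢ ∧ (θᵢ∘[·,·]) is injective; here θᵢ∘[·,·] denotes the 2-form (X,Y) ↦ θᵢ([X,Y]) on D. -/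
/-- Ω-regularity implies quadratic presentation.  A 2-step graded
nilpotent Lie algebra `g = D ⊕ g₂` (with central `g₂`) is encoded by its skew
bracket map `b : D × D → g₂`.  If there exist `X₁, X₂ ∈ D` with `b X₁ X₂ = 0`
such that for every `(T₁,T₂) ∈ g₂ × g₂` there is `X ∈ D` with `b X X₁ = T₁`
and `b X X₂ = T₂`, then the map `D* ⊗ g₂* → Λ³D*`,
`c ↦ ((x,y,z) ↦ c(x,b(y,z)) − c(y,b(x,z)) + c(z,b(x,y)))`, is injective. -/
theorem stmt11 {D G2 : Type*} [AddCommGroup D] [Module ℝ D]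
    [AddCommGroup G2] [Module ℝ G2]
    (b : D →ₗ[ℝ] D →ₗ[ℝ] G2) (hskew : ∀ x y : D, b x y = - b y x)
    (X₁ X₂ : D) (hX : b X₁ X₂ = 0)
    (hreg : ∀ T₁ T₂ : G2, ∃ X : D, b X X₁ = T₁ ∧ b X X₂ = T₂)
    (c : D →ₗ[ℝ] G2 →ₗ[ℝ] ℝ)
    (h : ∀ x y z : D, c x (b y z) - c y (b x z) + c z (b x y) = 0) :
    c = 0 := by
  -- Step 1: c X₂ = 0
  have hc2 : ∀ T : G2, c X₂ T = 0 := by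
    intro T
    obtain ⟨X, h1, h2⟩ := hreg T 0
    have := h X X₁ X₂
    rw [hX, h2, h1] at this
    simpa using this
  -- Step 2: c X₁ = 0
  have hX' : b X₂ X₁ = 0 := by rw [hskew, hX, neg_zero]
  have hc1 : ∀ T : G2, c X₁ T = 0 := by
    intro T
    obtain ⟨X, h1, h2⟩ := hreg 0 T
    have := h X X₂ X₁
    rw [hX', h1, h2] at this
    simpa using this
  -- Step 3: any realizer Y of (0, S) satisfies c Y = 0
  have hY0 : ∀ Y : D, b Y X₁ = 0 → ∀ T : G2, c Y T = 0 := by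
    intro Y hY1 T
    obtain ⟨X, h1, h2⟩ := hreg T 0
    have hbYX1 : b Y X₁ = 0 := hY1
    have := h X Y X₁
    rw [h1] at this
    have hbY : c X (b Y X₁) = 0 := by rw [hbYX1]; simp
    have hX1 : c X₁ (b X Y) = 0 := hc1 _
    rw [hbY, hX1] at this
    linarith
  -- Step 4: conclude
  ext d T
  obtain ⟨X, h1, h2⟩ := hreg 0 T
  have := h d X X₂
  rw [h2] at this
  have hcX : c X (b d X₂) = 0 := hY0 X h1 _
  have hcX2 : c X₂ (b d X) = 0 := hc2 _
  rw [hcX, hcX2] at this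
  simpa using this
end

section
/- Let x, y be octonions such that ⟨u·x, y⟩ = 0 for every purely imaginary octonion u (i.e. every u with Re(u) = 0), where ⟨·,·⟩ is the standard inner product on 𝕆 ≅ ℝ⁸. Then x and y are linearly dependent over ℝ. -/
open scoped RealInnerProductSpace Quaternion

noncomputable section

/-- The octonions, realized by the Cayley–Dickson construction as pairs of
quaternions, with multiplication `(a,b)(c,d) = (ac − d̄b, da + b c̄)`. -/
def octMul (p q : ℍ[ℝ] × ℍ[ℝ]) : ℍ[ℝ] × ℍ[ℝ] :=
  (p.1 * q.1 - star q.2 * p.2, q.2 * p.1 + p.2 * star q.1)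

/-- The real part of an octonion `(a,b)` is `Re a`. -/
def octRe (p : ℍ[ℝ] × ℍ[ℝ]) : ℝ := p.1.re

/-- The standard Euclidean inner product on the octonions `𝕆 ≅ ℍ × ℍ ≅ ℝ⁸`. -/
def octInner (p q : ℍ[ℝ] × ℍ[ℝ]) : ℝ := ⟪p.1, q.1⟫ + ⟪p.2, q.2⟫

/-!
Write `x = (a, b)` and `y = (c, d)`. Testing the hypothesis on `u = (0, w)` for every quaternion
`w` gives `d a = b c`; testing it on `u = (p, 0)` for every imaginary quaternion `p` shows that
`c ā + b̄ d = r` is real. Together they give `|a|² c = (c ā) a = r a - b̄ (d a) = r a - |b|² c`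
and likewise `|a|² d = r b - |b|² d`, i.e. `|x|² y = r x`.
-/

namespace Quaternion

section CommRing

variable {R : Type*} [CommRing R]

theorem re_mul_comm (p q : ℍ[R]) : (p * q).re = (q * p).re := by
  simp only [re_mul]; ring

variable {a b c d : ℍ[R]} {r : R}

theorem normSq_add_normSq_smul_left (hdc : d * a = b * c) (hr : c * star a + star b * d = r) :
    (normSq a + normSq b) • c = r • a := by
  have key : c * (star a * a) + star b * b * c = r * a := by
    rw [← hr, add_mul, mul_assoc, mul_assoc, mul_assoc, hdc]
  rwa [star_mul_self, star_mul_self, mul_coe_eq_smul, coe_mul_eq_smul, coe_mul_eq_smul,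
    ← add_smul] at key

theorem normSq_add_normSq_smul_right (hdc : d * a = b * c) (hr : c * star a + star b * d = r) :
    (normSq a + normSq b) • d = r • b := by
  have key : d * (a * star a) + b * star b * d = b * r := by
    rw [← hr, mul_add, ← mul_assoc, hdc, mul_assoc, mul_assoc]
  rwa [self_mul_star, self_mul_star, mul_coe_eq_smul, coe_mul_eq_smul, mul_coe_eq_smul,
    ← add_smul] at key

end CommRing

theorem inner_mul_left (p q r : ℍ[ℝ]) : ⟪p * q, r⟫ = ⟪q, star p * r⟫ := by
  rw [inner_def, inner_def, star_mul, star_star, mul_assoc, re_mul_comm, mul_assoc]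

theorem inner_mul_right (p q r : ℍ[ℝ]) : ⟪p * q, r⟫ = ⟪p, r * star q⟫ := by
  rw [inner_def, inner_def, star_mul, star_star, mul_assoc]

theorem eq_coe_re_of_forall_inner_eq_zero {q : ℍ[ℝ]} (h : ∀ p : ℍ[ℝ], p.re = 0 → ⟪p, q⟫ = 0) :
    q = q.re := by
  have him := h q.im q.re_im
  simp only [inner_def, re_mul, re_im, imI_im, imJ_im, imK_im, imI_star, imJ_star, imK_star,
    zero_mul, mul_neg, sub_neg_eq_add] at him
  have him0 : q.im = 0 := by
    ext <;> simp only [re_im, imI_im, imJ_im, imK_im, re_zero, imI_zero, imJ_zero, imK_zero] <;>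
      nlinarith [mul_self_nonneg q.imI, mul_self_nonneg q.imJ, mul_self_nonneg q.imK]
  simpa [him0] using (re_add_im q).symm

end Quaternion

open Quaternion

theorem mul_eq_mul_of_forall_octInner_eq_zero {x y : ℍ[ℝ] × ℍ[ℝ]}
    (h : ∀ u : ℍ[ℝ] × ℍ[ℝ], octRe u = 0 → octInner (octMul u x) y = 0) :
    y.2 * x.1 = x.2 * y.1 := by
  rw [← sub_eq_zero]
  refine ext_inner_left ℝ fun w => ?_
  have := h (0, w) rfl
  simp only [octMul, octInner, zero_mul, mul_zero, zero_sub, zero_add, inner_neg_left] at this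
  rw [inner_mul_left, inner_mul_right, star_star, star_star] at this
  rw [inner_sub_right, inner_zero_right]
  linarith

theorem exists_eq_coe_of_forall_octInner_eq_zero {x y : ℍ[ℝ] × ℍ[ℝ]}
    (h : ∀ u : ℍ[ℝ] × ℍ[ℝ], octRe u = 0 → octInner (octMul u x) y = 0) :
    ∃ r : ℝ, y.1 * star x.1 + star x.2 * y.2 = r := by
  refine ⟨_, eq_coe_re_of_forall_inner_eq_zero fun p hp => ?_⟩
  have := h (p, 0) hp
  simp only [octMul, octInner, zero_mul, mul_zero, sub_zero, add_zero] at this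
  rw [inner_mul_right, inner_mul_left] at this
  rwa [inner_add_right]

/-- If `x, y` are octonions such that `⟨u·x, y⟩ = 0` for every
purely imaginary octonion `u`, then `x` and `y` are linearly dependent over `ℝ`. -/
theorem stmt13 (x y : ℍ[ℝ] × ℍ[ℝ])
    (h : ∀ u : ℍ[ℝ] × ℍ[ℝ], octRe u = 0 → octInner (octMul u x) y = 0) :
    ¬ LinearIndependent ℝ ![x, y] := by
  obtain ⟨r, hr⟩ := exists_eq_coe_of_forall_octInner_eq_zero h
  have hdc := mul_eq_mul_of_forall_octInner_eq_zero h
  set N := normSq x.1 + normSq x.2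
  have hrel : N • y = r • x :=
    Prod.ext (normSq_add_normSq_smul_left hdc hr) (normSq_add_normSq_smul_right hdc hr)
  intro hli
  have hN : N ≠ 0 := by
    intro hN
    rw [add_eq_zero_iff_of_nonneg normSq_nonneg normSq_nonneg, normSq_eq_zero,
      normSq_eq_zero] at hN
    exact hli.ne_zero 0 (Prod.ext hN.1 hN.2)
  refine hN (LinearIndependent.pair_iff.mp hli (-r) N ?_).2
  rw [hrel, neg_smul, neg_add_cancel]

end
end
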